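/- Let A be a unital C*-algebra with a conditional expectation E : A → P of index-finite type with scalar index (Index E = c·1 with c ≥ 1), and suppose e is a projection in A with E(e) ≥ c^{-2} e. Setting g = c·E(e) and assuming g is a projection, one has g ≥ c^{-1} e, and consequently (1−g) e (1−g) = 0, hence ge = eg = e and ege = e. -/

import Mathlib

/-!
Multiplying `E(e) ≥ c⁻² e` by `c` gives `0 ≤ c⁻¹ e ≤ g`. A positive element dominated by a
projection `g` is absorbed by it (`a g = a = g a`), so `e g = e = g e`; the remaining identities
are algebra with `g e = e`.
-/

open scoped ComplexOrder

lemma IsStarProjection.mul_right_and_mul_left_of_nonneg_of_smul_le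
    {A : Type*} [NonUnitalCStarAlgebra A] [PartialOrder A] [StarOrderedRing A]
    {a p : A} {r : ℂ} (hp : IsStarProjection p) (ha : 0 ≤ a) (hr : 0 < r) (hap : r • a ≤ p) :
    a * p = a ∧ p * a = a := by
  obtain ⟨hright, hleft⟩ :=
    hp.mul_right_and_mul_left_of_nonneg_of_le (smul_nonneg hr.le ha) hap
  have hr0 : r ≠ 0 := hr.ne'
  rw [smul_mul_assoc] at hright
  rw [mul_smul_comm] at hleft
  exact ⟨smul_right_injective A hr0 hright, smul_right_injective A hr0 hleft⟩

theorem rokhlin_projection_dominates_general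
    {A : Type*} [CStarAlgebra A] [PartialOrder A] [StarOrderedRing A]
    (E : A →ₗ[ℂ] A)
    -- scalar index `c ≥ 1`:
    (c : ℝ) (hc : 1 ≤ c)
    -- `e` is a projection with `E(e) ≥ c⁻² e` (Watatani's inequality):
    (e : A) (he : IsIdempotentElem e) (hesa : IsSelfAdjoint e)
    (hEe : ((c : ℂ) ^ 2)⁻¹ • e ≤ E e)
    -- `g = c • E(e)` is a projection:
    (g : A) (hg : g = (c : ℂ) • E e)
    (hgproj : IsIdempotentElem g) (hgsa : IsSelfAdjoint g) :
    (c : ℂ)⁻¹ • e ≤ g ∧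
    (1 - g) * e * (1 - g) = 0 ∧
    g * e = e ∧ e * g = e ∧ e * g * e = e := by
  have hc0 : (0 : ℂ) < c := by exact_mod_cast one_pos.trans_le hc
  have hce : (c : ℂ)⁻¹ • e ≤ g := by
    have h := smul_le_smul_of_nonneg_left hEe hc0.le
    rwa [smul_smul, pow_two, mul_inv, ← mul_assoc, mul_inv_cancel₀ hc0.ne', one_mul, ← hg] at h
  have he_nonneg : 0 ≤ e := IsStarProjection.nonneg ⟨he, hesa⟩
  obtain ⟨heg, hge⟩ := IsStarProjection.mul_right_and_mul_left_of_nonneg_of_smul_le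
    ⟨hgproj, hgsa⟩ he_nonneg (inv_pos.mpr hc0) hce
  refine ⟨hce, ?_, hge, heg, by rw [heg, he.eq]⟩
  rw [sub_mul, one_mul, hge, sub_self, zero_mul]

/-- let `E : A → P` be a conditional expectation of index-finite type with
scalar index `Index E = c · 1` (`c ≥ 1`), and let `e` be a projection with
`E(e) ≥ c⁻² e`.  If `g := c • E(e)` is a projection, then `g ≥ c⁻¹ e`, hence
`(1−g) e (1−g) = 0`, and therefore `g e = e = e g` and `e g e = e`. -/
theorem rokhlin_projection_dominates
    {A : Type*} [CStarAlgebra A] [PartialOrder A] [StarOrderedRing A]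
    (P : StarSubalgebra ℂ A)
    (E : A →ₗ[ℂ] A)
    (hE_mem : ∀ x : A, E x ∈ P)
    (hE_proj : ∀ x ∈ P, E x = x)
    (hE_pos : ∀ x : A, 0 ≤ x → 0 ≤ E x)
    -- scalar index `c ≥ 1`:
    (c : ℝ) (hc : 1 ≤ c)
    -- `e` is a projection with `E(e) ≥ c⁻² e` (Watatani's inequality):
    (e : A) (he : IsIdempotentElem e) (hesa : IsSelfAdjoint e)
    (hEe : ((c : ℂ) ^ 2)⁻¹ • e ≤ E e)
    -- `g = c • E(e)` is a projection:
    (g : A) (hg : g = (c : ℂ) • E e)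
    (hgproj : IsIdempotentElem g) (hgsa : IsSelfAdjoint g) :
    (c : ℂ)⁻¹ • e ≤ g ∧
    (1 - g) * e * (1 - g) = 0 ∧
    g * e = e ∧ e * g = e ∧ e * g * e = e :=
  rokhlin_projection_dominates_general E c hc e he hesa hEe g hg hgproj hgsa
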